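/- Let Φ₁ and Φ₂ be quantum channels from d×d complex matrices to m×m complex matrices, Δ = Φ₁ − Φ₂, and let r be the rank of the M-operator M(Δ). Then ‖Δ‖_ME ≤ (r/d) · ‖Δ‖_⋄. -/

import Mathlib

open Matrix Kronecker ComplexOrder

noncomputable section

/-- The square root of a PSD matrix, as `Matrix.PosSemidef.sqrt` was defined in Mathlib
(Dec 2024); that definition has since been removed. -/
noncomputable def psdSqrt {n : Type*} [Fintype n] [DecidableEq n] {A : Matrix n n ℂ}
    (hA : A.PosSemidef) : Matrix n n ℂ :=
  (hA.1.eigenvectorUnitary : Matrix n n ℂ) * diagonal ((↑) ∘ (√·) ∘ hA.1.eigenvalues) *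
    (star hA.1.eigenvectorUnitary : Matrix n n ℂ)

/-- The matrix absolute value `|A| = √(AᴴA)`. -/
noncomputable def matAbs {n : Type*} [Fintype n] [DecidableEq n] (A : Matrix n n ℂ) :
    Matrix n n ℂ :=
  psdSqrt (Matrix.posSemidef_conjTranspose_mul_self A)

/-- The trace norm `‖A‖₁ = Tr √(AᴴA)`. -/
noncomputable def traceNorm {n : Type*} [Fintype n] [DecidableEq n] (A : Matrix n n ℂ) : ℝ :=
  ((matAbs A).trace).re

/-- The positive semidefinite square root of a PSD matrix (zero otherwise). -/
noncomputable def matSqrt {n : Type*} [Fintype n] [DecidableEq n] (σ : Matrix n n ℂ) :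
    Matrix n n ℂ :=
  open scoped Classical in
  if h : σ.PosSemidef then psdSqrt h else 0

/-- A density matrix: positive semidefinite with unit trace. -/
def IsDensity {n : Type*} [Fintype n] [DecidableEq n] (σ : Matrix n n ℂ) : Prop :=
  σ.PosSemidef ∧ σ.trace = 1

/-- The Choi operator of a linear map between matrix algebras. -/
noncomputable def choi {d m : ℕ}
    (S : Matrix (Fin d) (Fin d) ℂ →ₗ[ℂ] Matrix (Fin m) (Fin m) ℂ) :
    Matrix (Fin m × Fin d) (Fin m × Fin d) ℂ :=
  ∑ i : Fin d, ∑ j : Fin d,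
    (S (Matrix.single i j 1)) ⊗ₖ (Matrix.single i j 1)

/-- The ME-norm `‖S‖_ME = ‖J(S)‖₁ / d`. -/
noncomputable def MENorm {d m : ℕ}
    (S : Matrix (Fin d) (Fin d) ℂ →ₗ[ℂ] Matrix (Fin m) (Fin m) ℂ) : ℝ :=
  traceNorm (choi S) / d

/-- The diamond norm: supremum over density matrices σ of
`‖(1 ⊗ √σ) J(S) (1 ⊗ √σ)‖₁`. -/
noncomputable def diamondNorm {d m : ℕ}
    (S : Matrix (Fin d) (Fin d) ℂ →ₗ[ℂ] Matrix (Fin m) (Fin m) ℂ) : ℝ :=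
  ⨆ σ : {σ : Matrix (Fin d) (Fin d) ℂ // IsDensity σ},
    traceNorm (((1 : Matrix (Fin m) (Fin m) ℂ) ⊗ₖ matSqrt σ.1) * choi S *
      ((1 : Matrix (Fin m) (Fin m) ℂ) ⊗ₖ matSqrt σ.1))

/-- The M-operator `M(S) = Tr_B |J(S)|`. -/
noncomputable def Mop {d m : ℕ}
    (S : Matrix (Fin d) (Fin d) ℂ →ₗ[ℂ] Matrix (Fin m) (Fin m) ℂ) :
    Matrix (Fin d) (Fin d) ℂ :=
  Matrix.of fun k l => ∑ b : Fin m, matAbs (choi S) (b, k) (b, l)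

/-- A quantum channel: completely positive (PSD Choi operator, by Choi's theorem)
and trace preserving. -/
def IsQChannel {d m : ℕ}
    (S : Matrix (Fin d) (Fin d) ℂ →ₗ[ℂ] Matrix (Fin m) (Fin m) ℂ) : Prop :=
  (choi S).PosSemidef ∧ ∀ ρ : Matrix (Fin d) (Fin d) ℂ, (S ρ).trace = ρ.trace

/-!
Write `J` for the (Hermitian) Choi operator of `Δ`, `M = Tr_B|J|` and `Π` for the projection onto
the range of `M`, so `Tr Π = r`. Since `Tr(|J| (1 ⊗ (1 - Π))) = Tr(M (1 - Π)) = 0`, the positive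
operators `|J|` and `1 ⊗ (1 - Π)` are orthogonal, hence `J = (1 ⊗ Π) J (1 ⊗ Π)`. Testing the
diamond norm on the density matrix `σ = Π / r`, whose square root is `Π / √r`, gives
`‖Δ‖_⋄ ≥ ‖J / r‖₁ = ‖J‖₁ / r`.
-/

open scoped MatrixOrder

section SquareRoot

variable {n : Type*} [Fintype n] [DecidableEq n]

lemma psdSqrt_eq_cfcSqrt {A : Matrix n n ℂ} (hA : A.PosSemidef) : psdSqrt hA = CFC.sqrt A := by
  rw [CFC.sqrt_eq_cfc (a := A), cfc_nnreal_eq_real _ A hA.nonneg, hA.1.cfc_eq, IsHermitian.cfc,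
    Unitary.conjStarAlgAut_apply, psdSqrt]
  congr 3
  funext i
  simp [Real.coe_sqrt, Real.coe_toNNReal', max_eq_left (hA.eigenvalues_nonneg i)]

lemma psdSqrt_posSemidef {A : Matrix n n ℂ} (hA : A.PosSemidef) : (psdSqrt hA).PosSemidef := by
  rw [psdSqrt_eq_cfcSqrt]
  exact (CFC.sqrt_nonneg A).posSemidef

lemma psdSqrt_mul_self {A : Matrix n n ℂ} (hA : A.PosSemidef) : psdSqrt hA * psdSqrt hA = A := by
  rw [psdSqrt_eq_cfcSqrt]
  exact CFC.sqrt_mul_sqrt_self A hA.nonneg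

lemma psdSqrt_eq_of_mul_self {A B : Matrix n n ℂ} (hA : A.PosSemidef) (hB : B.PosSemidef)
    (h : B * B = A) : psdSqrt hA = B := by
  rw [psdSqrt_eq_cfcSqrt]
  exact (CFC.sqrt_eq_iff A B hA.nonneg hB.nonneg).mpr h

lemma matSqrt_of_posSemidef {A : Matrix n n ℂ} (hA : A.PosSemidef) : matSqrt A = psdSqrt hA :=
  dif_pos hA

lemma matAbs_posSemidef (A : Matrix n n ℂ) : (matAbs A).PosSemidef :=
  psdSqrt_posSemidef _

lemma matAbs_mul_self (A : Matrix n n ℂ) : matAbs A * matAbs A = Aᴴ * A :=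
  psdSqrt_mul_self _

lemma matAbs_real_smul (A : Matrix n n ℂ) {c : ℝ} (hc : 0 ≤ c) :
    matAbs ((c : ℂ) • A) = (c : ℂ) • matAbs A := by
  refine psdSqrt_eq_of_mul_self _ ((matAbs_posSemidef A).smul (by exact_mod_cast hc)) ?_
  rw [smul_mul_smul_comm, matAbs_mul_self, conjTranspose_smul, smul_mul_smul_comm]
  simp

lemma traceNorm_real_smul (A : Matrix n n ℂ) {c : ℝ} (hc : 0 ≤ c) :
    traceNorm ((c : ℂ) • A) = c * traceNorm A := by
  rw [traceNorm, traceNorm, matAbs_real_smul A hc, trace_smul, smul_eq_mul, Complex.re_ofReal_mul]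

end SquareRoot

section PosSemidef

variable {n : Type*} [Fintype n] [DecidableEq n]

lemma Matrix.PosSemidef.mul_eq_zero_of_trace_mul_eq_zero {A B : Matrix n n ℂ}
    (hA : A.PosSemidef) (hB : B.PosSemidef) (h : (A * B).trace = 0) : A * B = 0 := by
  set a := psdSqrt hA
  set b := psdSqrt hB
  have ha : aᴴ = a := (psdSqrt_posSemidef hA).isHermitian
  have hb : bᴴ = b := (psdSqrt_posSemidef hB).isHermitian
  -- `Tr((ab)ᴴ(ab)) = Tr(b a a b) = Tr(A B) = 0`, so `ab = 0`
  have hab : a * b = 0 := by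
    rw [← trace_conjTranspose_mul_self_eq_zero_iff, conjTranspose_mul, ha, hb, mul_assoc,
      ← mul_assoc a, psdSqrt_mul_self, trace_mul_comm, mul_assoc, psdSqrt_mul_self, h]
  calc A * B = a * (a * b) * b := by
        rw [← psdSqrt_mul_self hA, ← psdSqrt_mul_self hB]; simp only [a, b, mul_assoc]
    _ = 0 := by rw [hab, mul_zero, zero_mul]

lemma mul_eq_zero_of_trace_matAbs_mul_eq_zero {A Q : Matrix n n ℂ} (hQ : Q.PosSemidef)
    (h : (matAbs A * Q).trace = 0) : A * Q = 0 := by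
  have hAQ := (matAbs_posSemidef A).mul_eq_zero_of_trace_mul_eq_zero hQ h
  rw [← conjTranspose_mul_self_eq_zero, conjTranspose_mul, hQ.isHermitian.eq, mul_assoc,
    ← mul_assoc Aᴴ, ← matAbs_mul_self, mul_assoc, hAQ, mul_zero, mul_zero]

end PosSemidef

section PartialTrace

variable {k n : Type*} [Fintype k]

def partialTraceLeft (P : Matrix (k × n) (k × n) ℂ) : Matrix n n ℂ :=
  of fun i j => ∑ b, P (b, i) (b, j)

lemma trace_partialTraceLeft [Fintype n] (P : Matrix (k × n) (k × n) ℂ) :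
    (partialTraceLeft P).trace = P.trace := by
  simp only [trace, diag_apply, partialTraceLeft, of_apply, Fintype.sum_prod_type]
  exact Finset.sum_comm

lemma Matrix.IsHermitian.partialTraceLeft {P : Matrix (k × n) (k × n) ℂ} (hP : P.IsHermitian) :
    (partialTraceLeft P).IsHermitian := by
  ext i j
  simp only [conjTranspose_apply, _root_.partialTraceLeft, of_apply, star_sum]
  exact Finset.sum_congr rfl fun b _ => hP.apply (b, i) (b, j)

lemma trace_mul_one_kronecker [Fintype n] [DecidableEq k] (P : Matrix (k × n) (k × n) ℂ)
    (X : Matrix n n ℂ) :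
    (P * ((1 : Matrix k k ℂ) ⊗ₖ X)).trace = (partialTraceLeft P * X).trace := by
  simp only [trace, diag_apply, mul_apply, kroneckerMap_apply, one_apply, Fintype.sum_prod_type,
    partialTraceLeft, of_apply, mul_ite, mul_zero, ite_mul, zero_mul, Finset.sum_mul, one_mul,
    Finset.sum_ite_irrel, Finset.sum_const_zero, Finset.sum_ite_eq', Finset.mem_univ, if_true]
  rw [Finset.sum_comm]
  exact Finset.sum_congr rfl fun _ _ => Finset.sum_comm

end PartialTrace

section SupportProjection

variable {n : Type*} [Fintype n] [DecidableEq n]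

def supportProj (A : Matrix n n ℂ) : Matrix n n ℂ :=
  cfc (fun x : ℝ => if x = 0 then 0 else 1) A

variable {A : Matrix n n ℂ}

lemma Matrix.continuousOn_real_spectrum (f : ℝ → ℝ) : ContinuousOn f (spectrum ℝ A) :=
  finite_real_spectrum.continuousOn f

lemma supportProj_posSemidef : (supportProj A).PosSemidef := by
  refine (cfc_nonneg fun x _ => ?_ : 0 ≤ supportProj A).posSemidef
  split_ifs <;> norm_num

lemma one_sub_supportProj_posSemidef (hA : A.IsHermitian) : (1 - supportProj A).PosSemidef := by
  have : 1 - supportProj A = cfc (fun x : ℝ => 1 - if x = 0 then 0 else 1) A := by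
    rw [cfc_sub _ _ _ (continuousOn_real_spectrum _) (continuousOn_real_spectrum _),
      cfc_const_one ..]
    rfl
  refine (?_ : 0 ≤ 1 - supportProj A).posSemidef
  rw [this]
  exact cfc_nonneg fun x _ => by split_ifs <;> norm_num

lemma supportProj_mul_self : supportProj A * supportProj A = supportProj A := by
  rw [supportProj, ← cfc_mul _ _ _ (continuousOn_real_spectrum _) (continuousOn_real_spectrum _)]
  congr 1 with x
  split_ifs <;> norm_num

lemma mul_supportProj (hA : A.IsHermitian) : A * supportProj A = A := by
  nth_rw 1 [← cfc_id' ℝ A]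
  rw [supportProj, ← cfc_mul _ _ _ (continuousOn_real_spectrum _) (continuousOn_real_spectrum _)]
  nth_rw 2 [← cfc_id' ℝ A]
  congr 1 with x
  split_ifs <;> simp_all

lemma trace_supportProj (hA : A.IsHermitian) : (supportProj A).trace = A.rank := by
  rw [supportProj, hA.cfc_eq, IsHermitian.cfc, Unitary.conjStarAlgAut_apply, trace_mul_cycle,
    Unitary.coe_star_mul_self, one_mul, trace_diagonal, hA.rank_eq_card_non_zero_eigs,
    Fintype.card_subtype, ← Finset.sum_boole]
  refine Finset.sum_congr rfl fun i _ => ?_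
  split_ifs <;> simp_all

end SupportProjection

section Bounds

lemma norm_sq_apply_le_re_conjTranspose_mul_self {m n : Type*} [Fintype m] (B : Matrix m n ℂ)
    (i : m) (j : n) : ‖B i j‖ ^ 2 ≤ ((Bᴴ * B) j j).re := by
  have : ((Bᴴ * B) j j).re = ∑ l, ‖B l j‖ ^ 2 := by
    simp only [mul_apply, conjTranspose_apply, Complex.re_sum, Complex.star_def,
      Complex.conj_mul', ← Complex.ofReal_pow, Complex.ofReal_re]
  rw [this]
  exact Finset.single_le_sum (f := fun l => ‖B l j‖ ^ 2) (fun _ _ => by positivity)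
    (Finset.mem_univ i)

variable {n : Type*} [Fintype n] [DecidableEq n]

lemma traceNorm_le_sum_sqrt (A : Matrix n n ℂ) :
    traceNorm A ≤ ∑ i, √((Aᴴ * A) i i).re := by
  rw [traceNorm, trace, Complex.re_sum]
  refine Finset.sum_le_sum fun i _ => ?_
  have h := norm_sq_apply_le_re_conjTranspose_mul_self (matAbs A) i i
  rw [(matAbs_posSemidef A).isHermitian.eq, matAbs_mul_self] at h
  exact (Complex.re_le_norm _).trans (Real.le_sqrt_of_sq_le h)

lemma norm_matSqrt_apply_le_one {σ : Matrix n n ℂ} (hσ : IsDensity σ) (i j : n) :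
    ‖matSqrt σ i j‖ ≤ 1 := by
  have h := norm_sq_apply_le_re_conjTranspose_mul_self (matSqrt σ) i j
  rw [matSqrt_of_posSemidef hσ.1, (psdSqrt_posSemidef hσ.1).isHermitian.eq,
    psdSqrt_mul_self] at h
  have hdiag : (σ j j).re ≤ 1 := by
    have hre : ∑ l, (σ l l).re = 1 := by
      simpa [trace, Complex.re_sum] using congrArg Complex.re hσ.2
    rw [← hre]
    exact Finset.single_le_sum (f := fun l => (σ l l).re)
      (fun l _ => (Complex.nonneg_iff.mp (hσ.1.diag_nonneg (i := l))).1) (Finset.mem_univ j)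
  rw [← matSqrt_of_posSemidef hσ.1] at h
  nlinarith [norm_nonneg (matSqrt σ i j)]

lemma bddAbove_range_traceNorm_one_kronecker_matSqrt_mul {k : Type*} [Fintype k] [DecidableEq k]
    (J : Matrix (k × n) (k × n) ℂ) :
    BddAbove (Set.range fun σ : {σ : Matrix n n ℂ // IsDensity σ} =>
      traceNorm ((1 ⊗ₖ matSqrt σ.1) * J * (1 ⊗ₖ matSqrt σ.1))) := by
  set Y := fun s : Matrix n n ℂ => ((1 : Matrix k k ℂ) ⊗ₖ s) * J * (1 ⊗ₖ s)
  set K : Set (Matrix n n ℂ) := Set.univ.pi fun _ => Set.univ.pi fun _ => Metric.closedBall 0 1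
  have hK : IsCompact K :=
    isCompact_univ_pi fun _ => isCompact_univ_pi fun _ => isCompact_closedBall 0 1
  have hY : Continuous Y := by
    have : Continuous fun s : Matrix n n ℂ => (1 : Matrix k k ℂ) ⊗ₖ s :=
      continuous_matrix fun _ _ =>
        continuous_const.mul ((continuous_apply _).comp (continuous_apply _))
    exact (this.matrix_mul continuous_const).matrix_mul this
  have hg : Continuous fun s => ∑ i, √(((Y s)ᴴ * Y s) i i).re := by
    fun_prop
  obtain ⟨C, hC⟩ := hK.bddAbove_image hg.continuousOn
  refine ⟨C, ?_⟩
  rintro _ ⟨σ, rfl⟩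
  exact (traceNorm_le_sum_sqrt _).trans
    (hC ⟨matSqrt σ.1, Set.mem_univ_pi.mpr fun i => Set.mem_univ_pi.mpr fun j =>
      mem_closedBall_zero_iff.mpr (norm_matSqrt_apply_le_one σ.2 i j), rfl⟩)

end Bounds

section SupportOfAbs

variable {k n : Type*} [Fintype k] [DecidableEq k] [Fintype n] [DecidableEq n]

lemma mul_one_kronecker_supportProj_partialTraceLeft (J : Matrix (k × n) (k × n) ℂ) :
    J * (1 ⊗ₖ supportProj (partialTraceLeft (matAbs J))) = J := by
  set M := partialTraceLeft (matAbs J)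
  have hM : M.IsHermitian := (matAbs_posSemidef J).isHermitian.partialTraceLeft
  have hQ : ((1 : Matrix k k ℂ) ⊗ₖ (1 - supportProj M)).PosSemidef :=
    PosSemidef.one.kronecker (one_sub_supportProj_posSemidef hM)
  have hJQ := mul_eq_zero_of_trace_matAbs_mul_eq_zero hQ (by
    rw [trace_mul_one_kronecker, mul_sub, mul_one, mul_supportProj hM, sub_self, trace_zero])
  calc J * (1 ⊗ₖ supportProj M)
        = J * (1 ⊗ₖ supportProj M) + J * (1 ⊗ₖ (1 - supportProj M)) := by rw [hJQ, add_zero]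
    _ = J := by rw [← mul_add, ← kronecker_add, add_sub_cancel, one_kronecker_one, mul_one]

lemma one_kronecker_supportProj_partialTraceLeft_mul {J : Matrix (k × n) (k × n) ℂ}
    (hJ : J.IsHermitian) : (1 ⊗ₖ supportProj (partialTraceLeft (matAbs J))) * J = J := by
  have hP := (supportProj_posSemidef (A := partialTraceLeft (matAbs J))).isHermitian
  simpa [conjTranspose_mul, conjTranspose_kronecker, hP.eq, hJ.eq] using
    congrArg conjTranspose (mul_one_kronecker_supportProj_partialTraceLeft J)

end SupportOfAbs

section Channels

variable {d m : ℕ}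

lemma choi_sub (S T : Matrix (Fin d) (Fin d) ℂ →ₗ[ℂ] Matrix (Fin m) (Fin m) ℂ) :
    choi (S - T) = choi S - choi T := by
  ext
  simp [choi, Matrix.sum_apply, sub_mul]

lemma Mop_eq_partialTraceLeft (S : Matrix (Fin d) (Fin d) ℂ →ₗ[ℂ] Matrix (Fin m) (Fin m) ℂ) :
    Mop S = partialTraceLeft (matAbs (choi S)) :=
  rfl

lemma le_diamondNorm (S : Matrix (Fin d) (Fin d) ℂ →ₗ[ℂ] Matrix (Fin m) (Fin m) ℂ)
    {σ : Matrix (Fin d) (Fin d) ℂ} (hσ : IsDensity σ) :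
    traceNorm ((1 ⊗ₖ matSqrt σ) * choi S * (1 ⊗ₖ matSqrt σ)) ≤ diamondNorm S :=
  le_ciSup (bddAbove_range_traceNorm_one_kronecker_matSqrt_mul (choi S)) ⟨σ, hσ⟩

lemma traceNorm_choi_eq_zero_of_rank_Mop_eq_zero
    {S : Matrix (Fin d) (Fin d) ℂ →ₗ[ℂ] Matrix (Fin m) (Fin m) ℂ} (hr : (Mop S).rank = 0) :
    traceNorm (choi S) = 0 := by
  rw [Mop_eq_partialTraceLeft] at hr
  set M := partialTraceLeft (matAbs (choi S))
  have hM : M.IsHermitian := (matAbs_posSemidef _).isHermitian.partialTraceLeft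
  have hP : supportProj M = 0 := supportProj_posSemidef.trace_eq_zero_iff.mp <| by
    rw [trace_supportProj hM, hr, Nat.cast_zero]
  have hM0 : M = 0 := by rw [← mul_supportProj hM, hP, mul_zero]
  rw [traceNorm, ← trace_partialTraceLeft]
  change M.trace.re = 0
  rw [hM0, trace_zero, Complex.zero_re]

lemma inv_rank_Mop_mul_traceNorm_choi_le_diamondNorm
    {S : Matrix (Fin d) (Fin d) ℂ →ₗ[ℂ] Matrix (Fin m) (Fin m) ℂ} (hS : (choi S).IsHermitian)
    (hr : (Mop S).rank ≠ 0) :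
    ((Mop S).rank : ℝ)⁻¹ * traceNorm (choi S) ≤ diamondNorm S := by
  rw [Mop_eq_partialTraceLeft] at hr ⊢
  have hM := (matAbs_posSemidef (choi S)).isHermitian.partialTraceLeft
  set P := supportProj (partialTraceLeft (matAbs (choi S)))
  set r : ℝ := ((partialTraceLeft (matAbs (choi S))).rank : ℝ)
  have hr' : 0 < r := by positivity
  have hP : P.PosSemidef := supportProj_posSemidef
  have hσ : IsDensity (((r⁻¹ : ℝ) : ℂ) • P) := by
    refine ⟨hP.smul (by positivity), ?_⟩
    rw [trace_smul, trace_supportProj hM, smul_eq_mul]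
    exact_mod_cast inv_mul_cancel₀ hr'.ne'
  have hsqrt : matSqrt (((r⁻¹ : ℝ) : ℂ) • P) = (((√r)⁻¹ : ℝ) : ℂ) • P := by
    rw [matSqrt_of_posSemidef hσ.1]
    refine psdSqrt_eq_of_mul_self _ (hP.smul (by positivity)) ?_
    rw [smul_mul_smul_comm, supportProj_mul_self, ← Complex.ofReal_mul, ← mul_inv,
      Real.mul_self_sqrt hr'.le]
  have hsandwich :
      (1 ⊗ₖ ((((√r)⁻¹ : ℝ) : ℂ) • P)) * choi S * (1 ⊗ₖ ((((√r)⁻¹ : ℝ) : ℂ) • P)) =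
        ((r⁻¹ : ℝ) : ℂ) • choi S := by
    rw [kronecker_smul, smul_mul_assoc, mul_smul_comm, smul_mul_assoc, smul_smul,
      one_kronecker_supportProj_partialTraceLeft_mul hS,
      mul_one_kronecker_supportProj_partialTraceLeft, ← Complex.ofReal_mul, ← mul_inv,
      Real.mul_self_sqrt hr'.le]
  have h := le_diamondNorm S hσ
  rwa [hsqrt, hsandwich, traceNorm_real_smul _ (by positivity)] at h

lemma traceNorm_choi_le_rank_Mop_mul_diamondNorm
    {S : Matrix (Fin d) (Fin d) ℂ →ₗ[ℂ] Matrix (Fin m) (Fin m) ℂ} (hS : (choi S).IsHermitian) :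
    traceNorm (choi S) ≤ (Mop S).rank * diamondNorm S := by
  rcases eq_or_ne (Mop S).rank 0 with hr | hr
  · simp [traceNorm_choi_eq_zero_of_rank_Mop_eq_zero hr, hr]
  · have hr' : (0 : ℝ) < (Mop S).rank := by positivity
    calc traceNorm (choi S) = (Mop S).rank * (((Mop S).rank : ℝ)⁻¹ * traceNorm (choi S)) := by
          field_simp
      _ ≤ (Mop S).rank * diamondNorm S := by
          gcongr
          exact inv_rank_Mop_mul_traceNorm_choi_le_diamondNorm hS hr

end Channels

theorem stmt7_general {d m : ℕ}
    (Phi1 Phi2 : Matrix (Fin d) (Fin d) ℂ →ₗ[ℂ] Matrix (Fin m) (Fin m) ℂ)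
    (h1 : IsQChannel Phi1) (h2 : IsQChannel Phi2)
    (Delta : Matrix (Fin d) (Fin d) ℂ →ₗ[ℂ] Matrix (Fin m) (Fin m) ℂ)
    (hDelta : Delta = Phi1 - Phi2) :
    MENorm Delta ≤ (((Mop Delta).rank : ℝ) / d) * diamondNorm Delta := by
  have hJ : (choi Delta).IsHermitian := by
    rw [hDelta, choi_sub]
    exact h1.1.isHermitian.sub h2.1.isHermitian
  rw [MENorm, div_mul_eq_mul_div]
  exact div_le_div_of_nonneg_right (traceNorm_choi_le_rank_Mop_mul_diamondNorm hJ) d.cast_nonneg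

/-- with `r = rank M(Δ)` for a difference of channels `Δ = Φ₁ − Φ₂`,
`‖Δ‖_ME ≤ (r/d)·‖Δ‖_⋄`. -/
theorem stmt7 {d m : ℕ} (hd : 1 ≤ d)
    (Phi1 Phi2 : Matrix (Fin d) (Fin d) ℂ →ₗ[ℂ] Matrix (Fin m) (Fin m) ℂ)
    (h1 : IsQChannel Phi1) (h2 : IsQChannel Phi2)
    (Delta : Matrix (Fin d) (Fin d) ℂ →ₗ[ℂ] Matrix (Fin m) (Fin m) ℂ)
    (hDelta : Delta = Phi1 - Phi2) :
    MENorm Delta ≤ (((Mop Delta).rank : ℝ) / d) * diamondNorm Delta :=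
  stmt7_general Phi1 Phi2 h1 h2 Delta hDelta

end
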